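/- arXiv:1602.04045 — 7 statements merged into one kernel-verified Lean document; each statement's English description precedes it below -/
import Mathlib

section
/- Let H be a closed operator on a Hilbert space ℋ with domain D(H) such that Im⟨u, Hu⟩ = -½‖Cu‖² for all u ∈ D(H), where C is a bounded operator, and suppose H generates a strongly continuous semigroup {e^{-itH}}_{t≥0}. Then for all u ∈ ℋ and all t ≥ 0, ∫₀ᵗ ‖C e^{-isH} u‖² ds = ‖u‖² - ‖e^{-itH} u‖², and in particular ∫₀^∞ ‖C e^{-itH} u‖² dt ≤ ‖u‖². -/
/-!
On the domain, `Im⟪u, Hu⟫ = -½‖Cu‖²` says exactly that `d/ds ‖e^{-isH}u‖² = -‖C e^{-isH}u‖²`,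
so the identity is the fundamental theorem of calculus. It forces `‖e^{-itH}v‖ ≤ ‖v‖` on the
dense domain, hence everywhere; the resulting uniform bound makes both sides of the identity
continuous in `u`, which extends it from the domain to all of `ℋ`. Since the right-hand side is
at most `‖u‖²`, the improper integral converges with the same bound.
-/

open MeasureTheory Filter Topology ContinuousLinearMap

theorem opNorm_le_one_of_dense {𝕜 E F : Type*} [NontriviallyNormedField 𝕜]
    [SeminormedAddCommGroup E] [NormedSpace 𝕜 E] [SeminormedAddCommGroup F] [NormedSpace 𝕜 F]
    {D : Set E} (hD : Dense D) {T : E →L[𝕜] F} (hT : ∀ v ∈ D, ‖T v‖ ≤ ‖v‖) : ‖T‖ ≤ 1 :=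
  opNorm_le_bound _ zero_le_one fun u => by
    simpa using hD.induction hT (isClosed_le T.continuous.norm continuous_norm) u

section ImproperIntegral

variable {g : ℝ → ℝ} {a M : ℝ}

theorem integrableOn_Ioi_of_intervalIntegral_le (hg : Continuous g) (hg0 : 0 ≤ g)
    (hM : ∀ t, a ≤ t → ∫ s in a..t, g s ≤ M) : IntegrableOn g (Set.Ioi a) := by
  refine integrableOn_Ioi_of_intervalIntegral_norm_bounded M a (fun _ => hg.integrableOn_Ioc)
    tendsto_id ?_
  filter_upwards [eventually_ge_atTop a] with t ht
  simpa only [Real.norm_of_nonneg (hg0 _), id] using hM t ht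

theorem integral_Ioi_le_of_intervalIntegral_le (hg : Continuous g) (hg0 : 0 ≤ g)
    (hM : ∀ t, a ≤ t → ∫ s in a..t, g s ≤ M) : ∫ s in Set.Ioi a, g s ≤ M :=
  le_of_tendsto (intervalIntegral_tendsto_integral_Ioi a
      (integrableOn_Ioi_of_intervalIntegral_le hg hg0 hM) tendsto_id)
    (eventually_ge_atTop a |>.mono hM)

end ImproperIntegral

section Dissipation

variable {ℋ : Type*} [NormedAddCommGroup ℋ] [InnerProductSpace ℂ ℋ]

theorem re_inner_neg_I_smul (x y : ℋ) :
    (inner ℂ x (-(Complex.I • y))).re = (inner ℂ x y).im := by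
  simp [inner_smul_right]

theorem hasDerivAt_norm_sq_of_im_inner {f : ℝ → ℋ} {y : ℋ} {c s : ℝ}
    (hf : HasDerivAt f (-(Complex.I • y)) s) (hy : (inner ℂ (f s) y).im = -(1 / 2) * c) :
    HasDerivAt (fun r => ‖f r‖ ^ 2) (-c) s := by
  let _ : InnerProductSpace ℝ ℋ := InnerProductSpace.complexToReal
  convert hf.norm_sq using 1
  change -c = 2 * (inner ℂ (f s) (-(Complex.I • y))).re
  rw [re_inner_neg_I_smul, hy]
  ring

variable {C : ℋ →L[ℂ] ℋ} {U : ℝ → ℋ →L[ℂ] ℋ}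

theorem continuous_norm_sq_apply (hcont : ∀ u : ℋ, Continuous fun t => U t u) (u : ℋ) :
    Continuous fun s => ‖C (U s u)‖ ^ 2 :=
  (C.continuous.comp (hcont u)).norm.pow 2

theorem intervalIntegral_norm_sq_apply_eq {Dom : Set ℋ} {Hop : ℋ → ℋ} (hU0 : U 0 = 1)
    (hcont : ∀ u : ℋ, Continuous fun t => U t u)
    (hinv : ∀ t : ℝ, 0 ≤ t → ∀ u ∈ Dom, U t u ∈ Dom)
    (hdiss : ∀ u ∈ Dom, (inner ℂ u (Hop u)).im = -(1 / 2) * ‖C u‖ ^ 2)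
    (hgen : ∀ u ∈ Dom, ∀ t : ℝ, 0 ≤ t →
      HasDerivAt (fun s => U s u) (-(Complex.I • Hop (U t u))) t)
    {u : ℋ} (hu : u ∈ Dom) {t : ℝ} (ht : 0 ≤ t) :
    ∫ s in (0:ℝ)..t, ‖C (U s u)‖ ^ 2 = ‖u‖ ^ 2 - ‖U t u‖ ^ 2 := by
  have hderiv : ∀ s ∈ Set.uIcc 0 t,
      HasDerivAt (fun r => ‖U r u‖ ^ 2) (-‖C (U s u)‖ ^ 2) s := by
    intro s hs
    have hs0 : 0 ≤ s := (Set.uIcc_of_le ht ▸ hs).1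
    exact hasDerivAt_norm_sq_of_im_inner (hgen u hu s hs0) (hdiss _ (hinv s hs0 u hu))
  have hftc := intervalIntegral.integral_eq_sub_of_hasDerivAt hderiv
    ((continuous_norm_sq_apply hcont u).neg.intervalIntegrable 0 t)
  rw [intervalIntegral.integral_neg, hU0, one_apply_eq_self] at hftc
  linarith

theorem norm_apply_le_of_opNorm_le_one {s : ℝ} (hs : ‖U s‖ ≤ 1) (u : ℋ) :
    ‖C (U s u)‖ ≤ ‖C‖ * ‖u‖ :=
  calc ‖C (U s u)‖ ≤ ‖C‖ * ‖U s u‖ := C.le_opNorm _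
    _ ≤ ‖C‖ * ‖u‖ := by
      gcongr
      exact (U s).le_of_opNorm_le hs u |>.trans_eq (one_mul _)

theorem continuous_intervalIntegral_norm_sq_apply (hcont : ∀ u : ℋ, Continuous fun t => U t u)
    (hcontr : ∀ s : ℝ, 0 ≤ s → ‖U s‖ ≤ 1) {t : ℝ} (ht : 0 ≤ t) :
    Continuous fun u => ∫ s in (0:ℝ)..t, ‖C (U s u)‖ ^ 2 := by
  refine continuous_iff_continuousAt.2 fun u₀ =>
    intervalIntegral.continuousAt_of_dominated_interval (bound := fun _ => (‖C‖ * (‖u₀‖ + 1)) ^ 2)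
      (Eventually.of_forall fun u => (continuous_norm_sq_apply hcont u).aestronglyMeasurable)
      ?_ intervalIntegrable_const
      (ae_of_all _ fun s _ => ((C.continuous.comp (U s).continuous).norm.pow 2).continuousAt)
  filter_upwards [Metric.ball_mem_nhds u₀ one_pos] with u hu
  refine ae_of_all _ fun s hs => ?_
  have hs0 : 0 ≤ s := (Set.uIoc_of_le ht ▸ hs).1.le
  have hu' : ‖u‖ ≤ ‖u₀‖ + 1 := norm_le_of_mem_closedBall (Metric.ball_subset_closedBall hu)
  rw [Real.norm_of_nonneg (by positivity)]
  gcongr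
  exact (norm_apply_le_of_opNorm_le_one (hcontr s hs0) u).trans (by gcongr)

end Dissipation

theorem stmt0_general
    {ℋ : Type*} [NormedAddCommGroup ℋ] [InnerProductSpace ℂ ℋ]
    (C : ℋ →L[ℂ] ℋ)
    (Dom : Set ℋ) (hdense : Dense Dom)
    (Hop : ℋ → ℋ)
    (U : ℝ → ℋ →L[ℂ] ℋ)
    (hU0 : U 0 = 1)
    (hcont : ∀ u : ℋ, Continuous fun t => U t u)
    (hinv : ∀ t : ℝ, 0 ≤ t → ∀ u ∈ Dom, U t u ∈ Dom)
    (hdiss : ∀ u ∈ Dom, (@inner ℂ ℋ _ u (Hop u)).im = -(1 / 2) * ‖C u‖ ^ 2)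
    (hgen : ∀ u ∈ Dom, ∀ t : ℝ, 0 ≤ t →
      HasDerivAt (fun s => U s u) (-(Complex.I • Hop (U t u))) t) :
    ∀ u : ℋ,
      (∀ t : ℝ, 0 ≤ t →
        ∫ s in (0:ℝ)..t, ‖C (U s u)‖ ^ 2 = ‖u‖ ^ 2 - ‖U t u‖ ^ 2) ∧
      IntegrableOn (fun t => ‖C (U t u)‖ ^ 2) (Set.Ioi (0:ℝ)) ∧
      ∫ t in Set.Ioi (0:ℝ), ‖C (U t u)‖ ^ 2 ≤ ‖u‖ ^ 2 := by
  have henergy_dom : ∀ v ∈ Dom, ∀ t : ℝ, 0 ≤ t →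
      ∫ s in (0:ℝ)..t, ‖C (U s v)‖ ^ 2 = ‖v‖ ^ 2 - ‖U t v‖ ^ 2 := fun v hv t ht =>
    intervalIntegral_norm_sq_apply_eq hU0 hcont hinv hdiss hgen hv ht
  have hcontr : ∀ t : ℝ, 0 ≤ t → ‖U t‖ ≤ 1 := fun t ht =>
    opNorm_le_one_of_dense hdense fun v hv => by
      have hpos : 0 ≤ ∫ s in (0:ℝ)..t, ‖C (U s v)‖ ^ 2 :=
        intervalIntegral.integral_nonneg ht fun _ _ => by positivity
      exact (pow_le_pow_iff_left₀ (norm_nonneg _) (norm_nonneg _) two_ne_zero).1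
        (by linarith [henergy_dom v hv t ht])
  have henergy : ∀ u : ℋ, ∀ t : ℝ, 0 ≤ t →
      ∫ s in (0:ℝ)..t, ‖C (U s u)‖ ^ 2 = ‖u‖ ^ 2 - ‖U t u‖ ^ 2 := fun u t ht =>
    congrFun (Continuous.ext_on hdense (continuous_intervalIntegral_norm_sq_apply hcont hcontr ht)
      (by fun_prop) fun v hv => henergy_dom v hv t ht) u
  intro u
  have hbound : ∀ t : ℝ, 0 ≤ t → ∫ s in (0:ℝ)..t, ‖C (U s u)‖ ^ 2 ≤ ‖u‖ ^ 2 := fun t ht =>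
    (henergy u t ht).trans_le (sub_le_self _ (sq_nonneg _))
  have hg0 : 0 ≤ fun t => ‖C (U t u)‖ ^ 2 := fun _ => sq_nonneg _
  exact ⟨henergy u,
    integrableOn_Ioi_of_intervalIntegral_le (continuous_norm_sq_apply hcont u) hg0 hbound,
    integral_Ioi_le_of_intervalIntegral_le (continuous_norm_sq_apply hcont u) hg0 hbound⟩

/-- dissipation identity and smoothness bound for the semigroup
generated by `H = H₀ - (i/2)C*C`, encoded abstractly: `U t = e^{-itH}` is a
strongly continuous semigroup whose generator `Hop` (defined on a dense domain
`Dom`, invariant under the semigroup) satisfies `Im⟪u, Hop u⟫ = -½‖Cu‖²`. -/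
theorem stmt0
    {ℋ : Type*} [NormedAddCommGroup ℋ] [InnerProductSpace ℂ ℋ] [CompleteSpace ℋ]
    [TopologicalSpace.SeparableSpace ℋ]
    (C : ℋ →L[ℂ] ℋ)
    (Dom : Set ℋ) (hdense : Dense Dom)
    (Hop : ℋ → ℋ)
    (U : ℝ → ℋ →L[ℂ] ℋ)
    (hU0 : U 0 = 1)
    (hsemi : ∀ s t : ℝ, 0 ≤ s → 0 ≤ t → U (s + t) = (U s).comp (U t))
    (hcont : ∀ u : ℋ, Continuous fun t => U t u)
    (hinv : ∀ t : ℝ, 0 ≤ t → ∀ u ∈ Dom, U t u ∈ Dom)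
    (hdiss : ∀ u ∈ Dom, (@inner ℂ ℋ _ u (Hop u)).im = -(1 / 2) * ‖C u‖ ^ 2)
    (hgen : ∀ u ∈ Dom, ∀ t : ℝ, 0 ≤ t →
      HasDerivAt (fun s => U s u) (-(Complex.I • Hop (U t u))) t) :
    ∀ u : ℋ,
      (∀ t : ℝ, 0 ≤ t →
        ∫ s in (0:ℝ)..t, ‖C (U s u)‖ ^ 2 = ‖u‖ ^ 2 - ‖U t u‖ ^ 2) ∧
      IntegrableOn (fun t => ‖C (U t u)‖ ^ 2) (Set.Ioi (0:ℝ)) ∧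
      ∫ t in Set.Ioi (0:ℝ), ‖C (U t u)‖ ^ 2 ≤ ‖u‖ ^ 2 :=
  stmt0_general C Dom hdense Hop U hU0 hcont hinv hdiss hgen
end

section
/- Suppose that there exists a constant c̃₀ with 0 < c̃₀ < 1 such that ∫₀^∞ ‖C e^{-itH} u‖² dt ≤ c̃₀² ‖u‖² for all u ∈ ℋ. Then the group {e^{-itH}}_{t∈ℝ} is uniformly bounded with ‖e^{-itH}‖ ≤ (1 - c̃₀²)^{-1/2} for all t ∈ ℝ. -/
open MeasureTheory Filter Topology ContinuousLinearMap

/-- if `∫₀^∞ ‖C e^{-itH} u‖² dt ≤ c̃₀² ‖u‖²` with `0 < c̃₀ < 1`, then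
the group `{e^{-itH}}_{t∈ℝ}` (here `U t = e^{-itH}`) is uniformly bounded by
`(1 - c̃₀²)^{-1/2}`.  The dissipation identity
`‖e^{-itH}u‖² = ‖u‖² - ∫₀ᵗ ‖C e^{-isH}u‖² ds` (t ≥ 0) is part of the context. -/
theorem stmt1
    {ℋ : Type*} [NormedAddCommGroup ℋ] [InnerProductSpace ℂ ℋ] [CompleteSpace ℋ]
    [TopologicalSpace.SeparableSpace ℋ]
    (C : ℋ →L[ℂ] ℋ)
    (U : ℝ → ℋ →L[ℂ] ℋ)
    (hU0 : U 0 = 1)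
    (hgroup : ∀ s t : ℝ, U (s + t) = (U s).comp (U t))
    (hcont : ∀ u : ℋ, Continuous fun t => U t u)
    (c₀ : ℝ) (hc₀pos : 0 < c₀) (hc₀lt : c₀ < 1)
    (hident : ∀ u : ℋ, ∀ t : ℝ, 0 ≤ t →
      ‖U t u‖ ^ 2 = ‖u‖ ^ 2 - ∫ s in (0:ℝ)..t, ‖C (U s u)‖ ^ 2)
    (hsmooth : ∀ u : ℋ,
      IntegrableOn (fun t => ‖C (U t u)‖ ^ 2) (Set.Ioi (0:ℝ)) ∧
      ∫ t in Set.Ioi (0:ℝ), ‖C (U t u)‖ ^ 2 ≤ c₀ ^ 2 * ‖u‖ ^ 2) :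
    ∀ t : ℝ, ∀ u : ℋ, ‖U t u‖ ≤ (1 - c₀ ^ 2) ^ (-(1/2) : ℝ) * ‖u‖ := by
  have hbase : (0:ℝ) < 1 - c₀ ^ 2 := by nlinarith
  set K : ℝ := (1 - c₀ ^ 2) ^ (-(1/2) : ℝ) with hK
  have hKpos : 0 < K := Real.rpow_pos_of_pos hbase _
  have hKsq : K ^ 2 = (1 - c₀ ^ 2)⁻¹ := by
    rw [hK, ← Real.rpow_natCast ((1 - c₀ ^ 2) ^ (-(1/2) : ℝ)) 2,
      ← Real.rpow_mul hbase.le]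
    norm_num [Real.rpow_neg_one]
  intro t u
  -- reduce to squares
  have key : ‖U t u‖ ^ 2 ≤ (K * ‖u‖) ^ 2 := by
    have hKsq' : (K * ‖u‖) ^ 2 = (1 - c₀ ^ 2)⁻¹ * ‖u‖ ^ 2 := by
      rw [mul_pow, hKsq]
    rw [hKsq']
    rcases le_or_gt 0 t with ht | ht
    · -- nonnegative times: norm is nonincreasing
      have h1 : (0:ℝ) ≤ ∫ s in (0:ℝ)..t, ‖C (U s u)‖ ^ 2 :=
        intervalIntegral.integral_nonneg ht (fun s _ => by positivity)
      have h2 : ‖U t u‖ ^ 2 ≤ ‖u‖ ^ 2 := by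
        rw [hident u t ht]; linarith
      have h3 : ‖u‖ ^ 2 ≤ (1 - c₀ ^ 2)⁻¹ * ‖u‖ ^ 2 := by
        have : (1:ℝ) ≤ (1 - c₀ ^ 2)⁻¹ := by
          rw [le_inv_comm₀ one_pos hbase]; simp; nlinarith
        nlinarith [sq_nonneg ‖u‖]
      linarith
    · -- negative times
      set w : ℋ := U t u with hw
      have huw : U (-t) w = u := by
        have := congrArg (fun A => A u) (hgroup (-t) t)
        simp [hU0] at this
        simpa [hw] using this.symm
      have hident' : ‖u‖ ^ 2 = ‖w‖ ^ 2 - ∫ s in (0:ℝ)..(-t), ‖C (U s w)‖ ^ 2 := by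
        rw [← huw]; exact hident w (-t) (by linarith)
      have hIle : (∫ s in (0:ℝ)..(-t), ‖C (U s w)‖ ^ 2)
          ≤ ∫ s in Set.Ioi (0:ℝ), ‖C (U s w)‖ ^ 2 := by
        rw [intervalIntegral.integral_of_le (by linarith : (0:ℝ) ≤ -t)]
        apply setIntegral_mono_set (hsmooth w).1
        · filter_upwards with s using by positivity
        · exact Filter.Eventually.of_forall Set.Ioc_subset_Ioi_self
      have hItot : (∫ s in Set.Ioi (0:ℝ), ‖C (U s w)‖ ^ 2) ≤ c₀ ^ 2 * ‖w‖ ^ 2 :=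
        (hsmooth w).2
      have : (1 - c₀ ^ 2) * ‖w‖ ^ 2 ≤ ‖u‖ ^ 2 := by
        rw [hident']; nlinarith
      rw [le_inv_mul_iff₀ hbase]
      linarith
  have h := Real.sqrt_le_sqrt key
  rwa [Real.sqrt_sq (norm_nonneg _), Real.sqrt_sq (by positivity)] at h
end

section
/- Suppose Assumption Z0 holds with constant c₀ < 2, i.e., ∫_ℝ ‖C e^{-itH₀} u‖² dt ≤ c₀² ‖u‖² for all u ∈ ℋ. Then ‖e^{-itH} u‖ ≤ (1 - c₀/2)^{-1} ‖u‖ for all u ∈ ℋ and all t ∈ ℝ. -/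
open MeasureTheory Filter Topology ContinuousLinearMap

/-!
For `t ≥ 0` contractivity already gives the bound. For `t < 0` put `v = e^{-itH} u` and
`T = -t`; Duhamel's formula at time `T` applied to `v` reads `e^{-itH₀} u = v - ½ I` with
`I = ∫₀^T e^{isH₀} C*C e^{-isH} v ds`. Testing `I` against itself and using Cauchy–Schwarz in
`L²(0, T)`,
`‖I‖² = ∫₀^T Re ⟪C e^{-isH₀} I, C e^{-isH} v⟫ ds ≤ (c₀ ‖I‖) ‖v‖`,
the two factors being controlled by Assumption Z0 and by the smoothing bound for `e^{-isH}`.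
Hence `‖v‖ ≤ ‖u‖ + (c₀/2) ‖v‖`, which is the claim since `c₀ < 2`.
-/

section OneParameterGroup

variable {G R E : Type*} [AddGroup G] [Semiring R] [TopologicalSpace E] [AddCommMonoid E]
  [Module R E]

theorem apply_apply_neg_of_map_add {U : G → E →L[R] E} (h0 : U 0 = 1)
    (hadd : ∀ s t, U (s + t) = (U s).comp (U t)) (s : G) (x : E) : U s (U (-s) x) = x := by
  simpa [h0] using (congrArg (· x) (hadd s (-s))).symm

end OneParameterGroup

section CauchySchwarz

variable {α : Type*} [MeasurableSpace α] {μ : Measure α}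

theorem memLp_two_of_nonneg_of_integrable_sq {f : α → ℝ} (hf : 0 ≤ᵐ[μ] f)
    (hf2 : Integrable (fun a => f a ^ 2) μ) : MemLp f 2 μ := by
  have hsqrt : (fun a => √(f a ^ 2)) =ᵐ[μ] f := by
    filter_upwards [hf] with a ha using Real.sqrt_sq ha
  have hmeas : AEStronglyMeasurable f μ :=
    (Real.continuous_sqrt.comp_aestronglyMeasurable hf2.aestronglyMeasurable).congr hsqrt
  exact (memLp_two_iff_integrable_sq hmeas).mpr hf2

theorem integral_mul_le_sqrt_mul_sqrt {f g : α → ℝ} (hf : 0 ≤ᵐ[μ] f) (hg : 0 ≤ᵐ[μ] g)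
    (hf2 : MemLp f 2 μ) (hg2 : MemLp g 2 μ) :
    ∫ a, f a * g a ∂μ ≤ √(∫ a, f a ^ 2 ∂μ) * √(∫ a, g a ^ 2 ∂μ) := by
  have h := integral_mul_le_Lp_mul_Lq_of_nonneg Real.HolderConjugate.two_two hf hg
    (by simpa using hf2) (by simpa using hg2)
  simpa [Real.sqrt_eq_rpow] using h

end CauchySchwarz

theorem norm_integral_le_of_forall_integral_re_inner_le {𝕜 E α : Type*} [RCLike 𝕜]
    [NormedAddCommGroup E] [InnerProductSpace 𝕜 E] [NormedSpace ℝ E] [CompleteSpace E]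
    [MeasurableSpace α] {μ : Measure α} {f : α → E} (hf : Integrable f μ) {M : ℝ} (hM : 0 ≤ M)
    (h : ∀ x : E, ∫ a, RCLike.re (inner 𝕜 x (f a)) ∂μ ≤ M * ‖x‖) :
    ‖∫ a, f a ∂μ‖ ≤ M := by
  set I := ∫ a, f a ∂μ
  have hsq : ‖I‖ ^ 2 ≤ M * ‖I‖ :=
    calc ‖I‖ ^ 2 = RCLike.re (inner 𝕜 I I) := (inner_self_eq_norm_sq I).symm
      _ = ∫ a, RCLike.re (inner 𝕜 I (f a)) ∂μ := by
        rw [← integral_inner hf, integral_re (hf.const_inner I)]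
      _ ≤ M * ‖I‖ := h I
  nlinarith [norm_nonneg I]

/-- The dual form of Assumption Z0: `g ↦ ∫_S e^{isH₀} C* g(s) ds` is bounded by `c₀` on
`L²(S)`. -/
theorem norm_setIntegral_adjoint_le {ℋ : Type*} [NormedAddCommGroup ℋ] [InnerProductSpace ℂ ℋ]
    [CompleteSpace ℋ] (C : ℋ →L[ℂ] ℋ) (U0 : ℝ → ℋ →L[ℂ] ℋ) {c₀ : ℝ} (hc₀ : 0 ≤ c₀)
    (hinv : ∀ s x, U0 s (U0 (-s) x) = x) (hiso : ∀ s x, ‖U0 s x‖ = ‖x‖)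
    (hZ0 : ∀ u : ℋ, Integrable (fun t : ℝ => ‖C (U0 t u)‖ ^ 2) ∧
      ∫ t : ℝ, ‖C (U0 t u)‖ ^ 2 ≤ c₀ ^ 2 * ‖u‖ ^ 2)
    {S : Set ℝ} {g : ℝ → ℋ} (hg : IntegrableOn (fun s => ‖g s‖ ^ 2) S) :
    ‖∫ s in S, U0 (-s) (adjoint C (g s))‖ ≤ c₀ * √(∫ s in S, ‖g s‖ ^ 2) := by
  by_cases hf : IntegrableOn (fun s => U0 (-s) (adjoint C (g s))) S
  swap
  · rw [integral_undef hf, norm_zero]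
    positivity
  refine norm_integral_le_of_forall_integral_re_inner_le (𝕜 := ℂ) hf (by positivity) fun x => ?_
  have hpointwise : ∀ s, RCLike.re (inner ℂ x (U0 (-s) (adjoint C (g s)))) ≤
      ‖C (U0 s x)‖ * ‖g s‖ := fun s => by
    have hinner : inner ℂ x (U0 (-s) (adjoint C (g s))) = inner ℂ (C (U0 s x)) (g s) := by
      rw [← (LinearMap.norm_map_iff_inner_map_map (U0 s)).mp (hiso s), hinv,
        adjoint_inner_right]
    rw [hinner]
    exact re_inner_le_norm _ _
  have hx2 : MemLp (fun s => ‖C (U0 s x)‖) 2 (volume.restrict S) :=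
    memLp_two_of_nonneg_of_integrable_sq (.of_forall fun _ => norm_nonneg _) (hZ0 x).1.restrict
  have hg2 : MemLp (fun s => ‖g s‖) 2 (volume.restrict S) :=
    memLp_two_of_nonneg_of_integrable_sq (.of_forall fun _ => norm_nonneg _) hg
  have hZ0S : ∫ s in S, ‖C (U0 s x)‖ ^ 2 ≤ c₀ ^ 2 * ‖x‖ ^ 2 :=
    (setIntegral_le_integral (hZ0 x).1 (.of_forall fun _ => by positivity)).trans (hZ0 x).2
  calc ∫ s in S, RCLike.re (inner ℂ x (U0 (-s) (adjoint C (g s))))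
      ≤ ∫ s in S, ‖C (U0 s x)‖ * ‖g s‖ :=
        integral_mono (hf.const_inner x).re (hx2.integrable_mul hg2) hpointwise
    _ ≤ √(∫ s in S, ‖C (U0 s x)‖ ^ 2) * √(∫ s in S, ‖g s‖ ^ 2) :=
        integral_mul_le_sqrt_mul_sqrt (.of_forall fun _ => norm_nonneg _)
          (.of_forall fun _ => norm_nonneg _) hx2 hg2
    _ ≤ √(c₀ ^ 2 * ‖x‖ ^ 2) * √(∫ s in S, ‖g s‖ ^ 2) := by gcongr
    _ = c₀ * √(∫ s in S, ‖g s‖ ^ 2) * ‖x‖ := by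
        rw [← mul_pow, Real.sqrt_sq (by positivity)]
        ring

theorem stmt4_general
    {ℋ : Type*} [NormedAddCommGroup ℋ] [InnerProductSpace ℂ ℋ] [CompleteSpace ℋ]
    (C : ℋ →L[ℂ] ℋ)
    (U0 U : ℝ → ℋ →L[ℂ] ℋ)
    (hU00 : U0 0 = 1) (hgroup0 : ∀ s t : ℝ, U0 (s + t) = (U0 s).comp (U0 t))
    (hunitary : ∀ t : ℝ, ∀ u : ℋ, ‖U0 t u‖ = ‖u‖)
    (hU0' : U 0 = 1) (hgroup : ∀ s t : ℝ, U (s + t) = (U s).comp (U t))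
    (c₀ : ℝ) (hc₀nonneg : 0 ≤ c₀) (hc₀ : c₀ < 2)
    (hZ0 : ∀ u : ℋ, Integrable (fun t : ℝ => ‖C (U0 t u)‖ ^ 2) ∧
      ∫ t : ℝ, ‖C (U0 t u)‖ ^ 2 ≤ c₀ ^ 2 * ‖u‖ ^ 2)
    (hcontr : ∀ t : ℝ, 0 ≤ t → ∀ u : ℋ, ‖U t u‖ ≤ ‖u‖)
    (hsm : ∀ u : ℋ, IntegrableOn (fun t => ‖C (U t u)‖ ^ 2) (Set.Ioi (0:ℝ)) ∧
      ∫ t in Set.Ioi (0:ℝ), ‖C (U t u)‖ ^ 2 ≤ ‖u‖ ^ 2)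
    (hduhamel : ∀ u : ℋ, ∀ t : ℝ, 0 ≤ t →
      U0 (-t) (U t u) =
        u - (1/2 : ℂ) • ∫ s in (0:ℝ)..t, U0 (-s) ((adjoint C) (C (U s u)))) :
    ∀ t : ℝ, ∀ u : ℋ, ‖U t u‖ ≤ (1 - c₀ / 2)⁻¹ * ‖u‖ := by
  intro t u
  rw [inv_mul_eq_div, le_div_iff₀ (by linarith)]
  rcases le_or_gt 0 t with ht | ht
  · nlinarith [hcontr t ht u, norm_nonneg (U t u)]
  set v := U t u
  have hT : 0 ≤ -t := by linarith
  have hsmT : ∫ s in Set.Ioc 0 (-t), ‖C (U s v)‖ ^ 2 ≤ ‖v‖ ^ 2 :=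
    (setIntegral_mono_set (hsm v).1 (.of_forall fun _ => by positivity)
      Set.Ioc_subset_Ioi_self.eventuallyLE).trans (hsm v).2
  have hI : ‖∫ s in (0:ℝ)..(-t), U0 (-s) (adjoint C (C (U s v)))‖ ≤ c₀ * ‖v‖ := by
    rw [intervalIntegral.integral_of_le hT]
    refine (norm_setIntegral_adjoint_le C U0 hc₀nonneg (apply_apply_neg_of_map_add hU00 hgroup0)
      hunitary hZ0 ((hsm v).1.mono_set Set.Ioc_subset_Ioi_self)).trans ?_
    gcongr
    exact (Real.sqrt_le_left (norm_nonneg v)).mpr hsmT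
  have hduh := hduhamel v (-t) hT
  rw [neg_neg, show U (-t) v = u by simpa using apply_apply_neg_of_map_add hU0' hgroup (-t) u]
    at hduh
  have hv : ‖v‖ ≤ ‖u‖ + c₀ / 2 * ‖v‖ :=
    calc ‖v‖ = ‖U0 t u + (1/2 : ℂ) • ∫ s in (0:ℝ)..(-t), U0 (-s) (adjoint C (C (U s v)))‖ := by
          rw [hduh, sub_add_cancel]
      _ ≤ ‖U0 t u‖ + ‖(1/2 : ℂ) • ∫ s in (0:ℝ)..(-t), U0 (-s) (adjoint C (C (U s v)))‖ :=
          norm_add_le _ _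
      _ ≤ ‖u‖ + c₀ / 2 * ‖v‖ := by
          rw [hunitary, norm_smul]
          norm_num
          linarith
  linarith

/-- under Assumption Z0 with `c₀ < 2`
(`∫_ℝ ‖C e^{-itH₀} u‖² dt ≤ c₀² ‖u‖²`), one has
`‖e^{-itH} u‖ ≤ (1 - c₀/2)⁻¹ ‖u‖` for all `t ∈ ℝ`.
Here `U0 t = e^{-itH₀}` (unitary group) and `U t = e^{-itH}` with
`H = H₀ - (i/2)C*C`; the context facts (contractivity for `t ≥ 0`, the bound
`∫₀^∞ ‖C e^{-itH}u‖² dt ≤ ‖u‖²`, and Duhamel's formula) are hypotheses. -/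
theorem stmt4
    {ℋ : Type*} [NormedAddCommGroup ℋ] [InnerProductSpace ℂ ℋ] [CompleteSpace ℋ]
    [TopologicalSpace.SeparableSpace ℋ]
    (C : ℋ →L[ℂ] ℋ)
    (U0 U : ℝ → ℋ →L[ℂ] ℋ)
    (hU00 : U0 0 = 1) (hgroup0 : ∀ s t : ℝ, U0 (s + t) = (U0 s).comp (U0 t))
    (hunitary : ∀ t : ℝ, ∀ u : ℋ, ‖U0 t u‖ = ‖u‖)
    (hU0' : U 0 = 1) (hgroup : ∀ s t : ℝ, U (s + t) = (U s).comp (U t))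
    (c₀ : ℝ) (hc₀nonneg : 0 ≤ c₀) (hc₀ : c₀ < 2)
    (hZ0 : ∀ u : ℋ, Integrable (fun t : ℝ => ‖C (U0 t u)‖ ^ 2) ∧
      ∫ t : ℝ, ‖C (U0 t u)‖ ^ 2 ≤ c₀ ^ 2 * ‖u‖ ^ 2)
    (hcontr : ∀ t : ℝ, 0 ≤ t → ∀ u : ℋ, ‖U t u‖ ≤ ‖u‖)
    (hsm : ∀ u : ℋ, IntegrableOn (fun t => ‖C (U t u)‖ ^ 2) (Set.Ioi (0:ℝ)) ∧
      ∫ t in Set.Ioi (0:ℝ), ‖C (U t u)‖ ^ 2 ≤ ‖u‖ ^ 2)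
    (hduhamel : ∀ u : ℋ, ∀ t : ℝ, 0 ≤ t →
      U0 (-t) (U t u) =
        u - (1/2 : ℂ) • ∫ s in (0:ℝ)..t, U0 (-s) ((adjoint C) (C (U s u)))) :
    ∀ t : ℝ, ∀ u : ℋ, ‖U t u‖ ≤ (1 - c₀ / 2)⁻¹ * ‖u‖ :=
  stmt4_general C U0 U hU00 hgroup0 hunitary hU0' hgroup c₀ hc₀nonneg hc₀ hZ0 hcontr hsm hduhamel
end

section
/- Suppose Assumption Z0 holds: ∫_ℝ ‖C e^{-itH₀} u‖² dt ≤ c₀² ‖u‖² for all u ∈ ℋ. Then the wave operator W₋(H₀,H) := s-lim_{t→+∞} e^{itH₀} e^{-itH} exists on ℋ. -/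
/-!
Write `W t = e^{itH₀} e^{-itH} u`. By the semigroup law and Duhamel's formula for `e^{-itH} u`,
`W t' - W t = -½ e^{itH₀} I` with `I = ∫₀^{t'-t} e^{isH₀} C*C e^{-i(s+t)H} u ds`. Pairing `I` with
itself gives `‖I‖² ≤ ∫ ‖C e^{-isH₀} I‖ ‖C e^{-i(s+t)H} u‖ ds`, and Young's inequality with
Assumption Z0 bounds this by `(c₀² + 1)` times the tail `∫_t^∞ ‖C e^{-isH} u‖² ds`, which tends
to `0` because `‖C e^{-isH} u‖²` is integrable on `(0, ∞)`. So `W` is Cauchy at `+∞`.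
-/

open MeasureTheory Filter Topology ContinuousLinearMap

theorem ContinuousLinearMap.adjoint_eq_of_norm_map_of_comp_eq_one
    {E : Type*} [NormedAddCommGroup E] [InnerProductSpace ℂ E] [CompleteSpace E]
    {V W : E →L[ℂ] E} (hV : ∀ x, ‖V x‖ = ‖x‖) (hVW : V ∘L W = 1) : adjoint V = W :=
  calc adjoint V = adjoint V ∘L (V ∘L W) := by rw [hVW]; rfl
    _ = W := by rw [← comp_assoc, (norm_map_iff_adjoint_comp_self V).mp hV]; rfl

theorem norm_sq_intervalIntegral_adjoint_apply_le
    {E F : Type*} [NormedAddCommGroup E] [InnerProductSpace ℂ E] [CompleteSpace E]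
    [NormedAddCommGroup F] [InnerProductSpace ℂ F] [CompleteSpace F]
    (A : ℝ → E →L[ℂ] F) {c : ℝ}
    (hA : ∀ x, Integrable (fun s => ‖A s x‖ ^ 2) ∧ ∫ s, ‖A s x‖ ^ 2 ≤ c ^ 2 * ‖x‖ ^ 2)
    (g : ℝ → F) {a b : ℝ} (hab : a ≤ b)
    (hg : IntervalIntegrable (fun s => ‖g s‖ ^ 2) volume a b) :
    ‖∫ s in a..b, adjoint (A s) (g s)‖ ^ 2 ≤ (c ^ 2 + 1) * ∫ s in a..b, ‖g s‖ ^ 2 := by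
  set I := ∫ s in a..b, adjoint (A s) (g s)
  have hg0 : 0 ≤ ∫ s in a..b, ‖g s‖ ^ 2 :=
    intervalIntegral.integral_nonneg hab fun s _ => sq_nonneg _
  by_cases hIint : IntervalIntegrable (fun s => adjoint (A s) (g s)) volume a b
  case neg =>
    rw [show I = 0 from intervalIntegral.integral_undef hIint]
    simpa using mul_nonneg (by positivity) hg0
  set L := c ^ 2 + 1
  have hL : 0 < L := by positivity
  have hAI := (hA I).1.intervalIntegrable (a := a) (b := b)
  have hAI_le : ∫ s in a..b, ‖A s I‖ ^ 2 ≤ c ^ 2 * ‖I‖ ^ 2 := by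
    rw [intervalIntegral.integral_of_le hab]
    exact (setIntegral_le_integral (hA I).1 (ae_of_all _ fun s => sq_nonneg _)).trans (hA I).2
  -- `L = c² + 1` makes the `‖I‖²` term from Young's inequality absorbable, also when `c = 0`.
  have young : ∀ x y : ℝ, x * y ≤ (x ^ 2 / L + L * y ^ 2) / 2 := fun x y => by
    have := sq_nonneg (x - L * y)
    rw [div_add' _ _ _ hL.ne', div_div, le_div_iff₀ (by positivity)]
    nlinarith
  have hI : ‖I‖ ^ 2 ≤ (c ^ 2 / L * ‖I‖ ^ 2 + L * ∫ s in a..b, ‖g s‖ ^ 2) / 2 :=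
    calc ‖I‖ ^ 2 = RCLike.re (inner ℂ I I) := (inner_self_eq_norm_sq I).symm
      _ ≤ ‖inner ℂ I I‖ := RCLike.re_le_norm _
      _ = ‖∫ s in a..b, inner ℂ (A s I) (g s)‖ := by
        simpa only [innerSL_apply_apply, adjoint_inner_right] using
          congrArg norm ((innerSL ℂ I).intervalIntegral_comp_comm hIint).symm
      _ ≤ ∫ s in a..b, ‖inner ℂ (A s I) (g s)‖ :=
        intervalIntegral.norm_integral_le_integral_norm hab
      _ ≤ ∫ s in a..b, (‖A s I‖ ^ 2 / L + L * ‖g s‖ ^ 2) / 2 := by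
        refine intervalIntegral.integral_mono_on hab ?_ ?_ fun s _ =>
          (norm_inner_le_norm _ _).trans (young _ _)
        · simpa only [innerSL_apply_apply, adjoint_inner_right] using
            (IntervalIntegrable.norm (f := fun s => innerSL ℂ I (adjoint (A s) (g s)))
              ⟨(innerSL ℂ I).integrable_comp hIint.1, (innerSL ℂ I).integrable_comp hIint.2⟩)
        · exact ((hAI.div_const L).add (hg.const_mul L)).div_const 2
      _ = ((∫ s in a..b, ‖A s I‖ ^ 2) / L + L * ∫ s in a..b, ‖g s‖ ^ 2) / 2 := by
        rw [intervalIntegral.integral_div, intervalIntegral.integral_add (hAI.div_const L)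
          (hg.const_mul L), intervalIntegral.integral_div, intervalIntegral.integral_const_mul]
      _ ≤ (c ^ 2 / L * ‖I‖ ^ 2 + L * ∫ s in a..b, ‖g s‖ ^ 2) / 2 := by
        rw [div_mul_eq_mul_div]; gcongr
  have hcL : c ^ 2 / L ≤ 1 := (div_le_one hL).2 (by linarith)
  linarith [mul_le_mul_of_nonneg_right hcL (sq_nonneg ‖I‖)]

theorem sub_eq_smul_intervalIntegral_of_duhamel {E : Type*} [NormedAddCommGroup E]
    [NormedSpace ℂ E] {U0 U : ℝ → E →L[ℂ] E} {B : E →L[ℂ] E} {a : ℂ}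
    (hgroup0 : ∀ s t : ℝ, U0 (s + t) = (U0 s).comp (U0 t))
    (hsemi : ∀ s t : ℝ, 0 ≤ s → 0 ≤ t → U (s + t) = (U s).comp (U t))
    (hduhamel : ∀ u : E, ∀ t : ℝ, 0 ≤ t →
      U0 (-t) (U t u) = u - a • ∫ s in (0:ℝ)..t, U0 (-s) (B (U s u)))
    (u : E) {t t' : ℝ} (ht : 0 ≤ t) (htt' : t ≤ t') :
    U0 (-t') (U t' u) - U0 (-t) (U t u) =
      -(a • U0 (-t) (∫ s in (0:ℝ)..t' - t, U0 (-s) (B (U (s + t) u)))) := by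
  have hτ : 0 ≤ t' - t := sub_nonneg.2 htt'
  have hU : U t' u = U (t' - t) (U t u) := by
    rw [← comp_apply, ← hsemi _ _ hτ ht, sub_add_cancel]
  have hU0 : U0 (-t') = (U0 (-t)).comp (U0 (-(t' - t))) := by
    rw [← hgroup0]; ring_nf
  have hshift : ∫ s in (0:ℝ)..t' - t, U0 (-s) (B (U s (U t u))) =
      ∫ s in (0:ℝ)..t' - t, U0 (-s) (B (U (s + t) u)) :=
    intervalIntegral.integral_congr fun s hs => by
      rw [Set.uIcc_of_le hτ] at hs
      rw [hsemi _ _ hs.1 ht, comp_apply]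
  rw [hU, hU0, comp_apply, hduhamel _ _ hτ, hshift, map_sub, map_smul]
  abel

theorem tendsto_setIntegral_Ioi_atTop_zero {f : ℝ → ℝ} {a : ℝ} (hf : IntegrableOn f (Set.Ioi a)) :
    Tendsto (fun t => ∫ s in Set.Ioi t, f s) atTop (𝓝 0) := by
  have h := tendsto_setIntegral_of_antitone (fun t => measurableSet_Ioi (a := t))
    (fun _ _ hst => Set.Ioi_subset_Ioi hst) ⟨a, hf⟩
  have hempty : ⋂ t : ℝ, Set.Ioi t = ∅ := Set.iInter_eq_empty_iff.mpr fun s => ⟨s, lt_irrefl s⟩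
  rwa [hempty, Measure.restrict_empty, integral_zero_measure] at h

theorem exists_tendsto_atTop_of_norm_sub_sq_le {E : Type*} [NormedAddCommGroup E]
    [CompleteSpace E] {f : ℝ → E} {b : ℝ → ℝ} (hb : Tendsto b atTop (𝓝 0))
    (hf : ∀ t t', 0 ≤ t → t ≤ t' → ‖f t' - f t‖ ^ 2 ≤ b t) :
    ∃ w, Tendsto f atTop (𝓝 w) := by
  refine cauchySeq_tendsto_of_complete (Metric.cauchySeq_iff'.2 fun ε hε => ?_)
  obtain ⟨N, hN, hN0⟩ :=
    ((hb.eventually (gt_mem_nhds (pow_pos hε 2))).and (eventually_ge_atTop 0)).exists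
  exact ⟨N, fun n hn => by
    rw [dist_eq_norm]; exact lt_of_pow_lt_pow_left₀ 2 hε.le ((hf N n hN0 hn).trans_lt hN)⟩

theorem stmt6_general
    {ℋ : Type*} [NormedAddCommGroup ℋ] [InnerProductSpace ℂ ℋ] [CompleteSpace ℋ]
    (C : ℋ →L[ℂ] ℋ)
    (U0 U : ℝ → ℋ →L[ℂ] ℋ)
    (hU00 : U0 0 = 1) (hgroup0 : ∀ s t : ℝ, U0 (s + t) = (U0 s).comp (U0 t))
    (hunitary : ∀ t : ℝ, ∀ u : ℋ, ‖U0 t u‖ = ‖u‖)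
    (hsemi : ∀ s t : ℝ, 0 ≤ s → 0 ≤ t → U (s + t) = (U s).comp (U t))
    (c₀ : ℝ)
    (hZ0 : ∀ u : ℋ, Integrable (fun t : ℝ => ‖C (U0 t u)‖ ^ 2) ∧
      ∫ t : ℝ, ‖C (U0 t u)‖ ^ 2 ≤ c₀ ^ 2 * ‖u‖ ^ 2)
    (hsm : ∀ u : ℋ, IntegrableOn (fun s => ‖C (U s u)‖ ^ 2) (Set.Ioi (0:ℝ)) ∧
      ∫ s in Set.Ioi (0:ℝ), ‖C (U s u)‖ ^ 2 ≤ ‖u‖ ^ 2)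
    (hduhamel : ∀ u : ℋ, ∀ t : ℝ, 0 ≤ t →
      U0 (-t) (U t u) =
        u - (1/2 : ℂ) • ∫ s in (0:ℝ)..t, U0 (-s) ((adjoint C) (C (U s u)))) :
    ∀ u : ℋ, ∃ w : ℋ, Tendsto (fun t => U0 (-t) (U t u)) atTop (𝓝 w) := by
  intro u
  have hadj : ∀ s, adjoint (C ∘L U0 s) = U0 (-s) ∘L adjoint C := fun s => by
    rw [adjoint_comp, adjoint_eq_of_norm_map_of_comp_eq_one (hunitary s)
      (by rw [← hgroup0, add_neg_cancel, hU00])]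
  have hφ := (hsm u).1
  refine exists_tendsto_atTop_of_norm_sub_sq_le
    (b := fun t => (c₀ ^ 2 + 1) / 4 * ∫ s in Set.Ioi t, ‖C (U s u)‖ ^ 2)
    (by simpa using (tendsto_setIntegral_Ioi_atTop_zero hφ).const_mul ((c₀ ^ 2 + 1) / 4))
    fun t t' ht htt' => ?_
  have hφ_Ioc : IntegrableOn (fun s => ‖C (U s u)‖ ^ 2) (Set.Ioc t t') :=
    hφ.mono_set fun s hs => ht.trans_lt hs.1
  have hφ_shift :=
    ((intervalIntegrable_iff_integrableOn_Ioc_of_le htt').2 hφ_Ioc).comp_add_right t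
  rw [sub_self] at hφ_shift
  have hI := norm_sq_intervalIntegral_adjoint_apply_le (fun s => C ∘L U0 s) hZ0
    (fun s => C (U (s + t) u)) (sub_nonneg.2 htt') hφ_shift
  simp only [hadj, comp_apply] at hI
  rw [intervalIntegral.integral_comp_add_right (fun s => ‖C (U s u)‖ ^ 2), zero_add,
    sub_add_cancel, intervalIntegral.integral_of_le htt'] at hI
  have htail : ∫ s in Set.Ioc t t', ‖C (U s u)‖ ^ 2 ≤ ∫ s in Set.Ioi t, ‖C (U s u)‖ ^ 2 :=
    setIntegral_mono_set (hφ.mono_set (Set.Ioi_subset_Ioi ht))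
      (ae_of_all _ fun s => sq_nonneg _) Set.Ioc_subset_Ioi_self.eventuallyLE
  rw [sub_eq_smul_intervalIntegral_of_duhamel (B := adjoint C ∘L C) hgroup0 hsemi hduhamel u
    ht htt', norm_neg, norm_smul, hunitary, mul_pow, show ‖(1 / 2 : ℂ)‖ ^ 2 = 1 / 4 by norm_num]
  simp only [comp_apply]
  have := mul_le_mul_of_nonneg_left htail (by positivity : (0:ℝ) ≤ c₀ ^ 2 + 1)
  linarith

/-- under Assumption Z0 (`∫_ℝ ‖C e^{-itH₀} u‖² dt ≤ c₀² ‖u‖²`), the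
wave operator `W₋(H₀,H) = s-lim_{t→+∞} e^{itH₀} e^{-itH}` exists on ℋ.
Here `U0 t = e^{-itH₀}` (unitary group), `U t = e^{-itH}` a contraction
semigroup for `t ≥ 0` with `∫₀^∞ ‖C e^{-isH}u‖² ds ≤ ‖u‖²`, and Duhamel's
formula holds. -/
theorem stmt6
    {ℋ : Type*} [NormedAddCommGroup ℋ] [InnerProductSpace ℂ ℋ] [CompleteSpace ℋ]
    [TopologicalSpace.SeparableSpace ℋ]
    (C : ℋ →L[ℂ] ℋ)
    (U0 U : ℝ → ℋ →L[ℂ] ℋ)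
    (hU00 : U0 0 = 1) (hgroup0 : ∀ s t : ℝ, U0 (s + t) = (U0 s).comp (U0 t))
    (hunitary : ∀ t : ℝ, ∀ u : ℋ, ‖U0 t u‖ = ‖u‖)
    (hU0' : U 0 = 1)
    (hsemi : ∀ s t : ℝ, 0 ≤ s → 0 ≤ t → U (s + t) = (U s).comp (U t))
    (hcontr : ∀ t : ℝ, 0 ≤ t → ∀ u : ℋ, ‖U t u‖ ≤ ‖u‖)
    (c₀ : ℝ)
    (hZ0 : ∀ u : ℋ, Integrable (fun t : ℝ => ‖C (U0 t u)‖ ^ 2) ∧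
      ∫ t : ℝ, ‖C (U0 t u)‖ ^ 2 ≤ c₀ ^ 2 * ‖u‖ ^ 2)
    (hsm : ∀ u : ℋ, IntegrableOn (fun s => ‖C (U s u)‖ ^ 2) (Set.Ioi (0:ℝ)) ∧
      ∫ s in Set.Ioi (0:ℝ), ‖C (U s u)‖ ^ 2 ≤ ‖u‖ ^ 2)
    (hduhamel : ∀ u : ℋ, ∀ t : ℝ, 0 ≤ t →
      U0 (-t) (U t u) =
        u - (1/2 : ℂ) • ∫ s in (0:ℝ)..t, U0 (-s) ((adjoint C) (C (U s u)))) :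
    ∀ u : ℋ, ∃ w : ℋ, Tendsto (fun t => U0 (-t) (U t u)) atTop (𝓝 w) :=
  stmt6_general C U0 U hU00 hgroup0 hunitary hsemi c₀ hZ0 hsm hduhamel
end

section
/- Suppose Assumption Y0 holds: there is a dense subset E ⊂ ℋ such that ∫_ℝ ‖C*C e^{-itH₀} u‖ dt < ∞ for all u ∈ E. Then the wave operator W₊(H,H₀) := s-lim_{t→+∞} e^{-itH} e^{itH₀} exists on ℋ. -/
open MeasureTheory Filter Topology ContinuousLinearMap

/-- under Assumption Y0 (a dense set `E ⊂ ℋ` with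
`∫_ℝ ‖C*C e^{-itH₀} u‖ dt < ∞` for `u ∈ E`), the wave operator
`W₊(H,H₀) = s-lim_{t→+∞} e^{-itH} e^{itH₀}` exists on ℋ.  Here
`U0 t = e^{-itH₀}` (unitary group), `U t = e^{-itH}` a contraction semigroup
for `t ≥ 0`, and Duhamel's formula holds. -/
theorem stmt7
    {ℋ : Type*} [NormedAddCommGroup ℋ] [InnerProductSpace ℂ ℋ] [CompleteSpace ℋ]
    [TopologicalSpace.SeparableSpace ℋ]
    (C : ℋ →L[ℂ] ℋ)
    (U0 U : ℝ → ℋ →L[ℂ] ℋ)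
    (hU00 : U0 0 = 1) (hgroup0 : ∀ s t : ℝ, U0 (s + t) = (U0 s).comp (U0 t))
    (hunitary : ∀ t : ℝ, ∀ u : ℋ, ‖U0 t u‖ = ‖u‖)
    (hU0' : U 0 = 1)
    (hsemi : ∀ s t : ℝ, 0 ≤ s → 0 ≤ t → U (s + t) = (U s).comp (U t))
    (hcontr : ∀ t : ℝ, 0 ≤ t → ∀ u : ℋ, ‖U t u‖ ≤ ‖u‖)
    (E : Set ℋ) (hE : Dense E)
    (hY0 : ∀ u ∈ E, Integrable (fun t : ℝ => ‖(adjoint C) (C (U0 t u))‖))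
    (hduhamel : ∀ u : ℋ, ∀ t : ℝ, 0 ≤ t →
      U t (U0 (-t) u) =
        u - (1/2 : ℂ) • ∫ s in (0:ℝ)..t, U s ((adjoint C) (C (U0 (-s) u)))) :
    ∀ u : ℋ, ∃ w : ℋ, Tendsto (fun t => U t (U0 (-t) u)) atTop (𝓝 w) := by
  -- the evolution composed with the group
  set f : ℋ → ℝ → ℋ := fun v t => U t (U0 (-t) v) with hf
  -- For `v ∈ E`, `f v` is Cauchy at `atTop`.
  have hcau : ∀ v ∈ E, CauchySeq (f v) := by
    intro v hv
    set g : ℝ → ℝ := fun s => ‖(adjoint C) (C (U0 (-s) v))‖ with hg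
    have hgint : Integrable g := by simpa using (hY0 v hv).comp_neg
    have hgnn : ∀ s, 0 ≤ g s := fun s => norm_nonneg _
    set G : ℝ → ℝ := fun t => ∫ s in Set.Iic t, g s with hG
    have hGmono : Monotone G := by
      intro a b hab
      exact setIntegral_mono_set hgint.integrableOn
        (Filter.Eventually.of_forall fun s => hgnn s)
        (Filter.Eventually.of_forall (Set.Iic_subset_Iic.2 hab))
    have hGbdd : BddAbove (Set.range G) := by
      refine ⟨∫ s, g s, ?_⟩
      rintro _ ⟨t, rfl⟩
      exact setIntegral_le_integral hgint (Filter.Eventually.of_forall fun s => hgnn s)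
    have hGcauchy : CauchySeq G := (tendsto_atTop_ciSup hGmono hGbdd).cauchySeq
    -- key estimate: for `0 ≤ t' ≤ t`, `‖f v t - f v t'‖ ≤ (1/2) (G t - G t')`
    have key : ∀ t' t : ℝ, 0 ≤ t' → t' ≤ t →
        ‖f v t - f v t'‖ ≤ (1/2) * (G t - G t') := by
      intro t' t ht' htt
      set τ := t - t' with hτdef
      have hτ : 0 ≤ τ := sub_nonneg.2 htt
      set w := U0 (-t') v with hw
      -- rewrite the group action
      have hU0w : ∀ s : ℝ, U0 (-s) w = U0 (-(s + t')) v := by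
        intro s
        have h1 : (-(s + t')) = (-s) + (-t') := by ring
        rw [h1, hgroup0]; rfl
      have hd := hduhamel w τ hτ
      set I : ℋ := ∫ s in (0:ℝ)..τ, U s ((adjoint C) (C (U0 (-s) w))) with hI
      -- apply `U t'` to Duhamel's formula for `w` at time `τ`
      have hLHS : U t' (U τ (U0 (-τ) w)) = f v t := by
        have h1 : U t' (U τ (U0 (-τ) w)) = U (t' + τ) (U0 (-τ) w) := by
          rw [hsemi t' τ ht' hτ]; rfl
        have h2 : t' + τ = t := by ring
        have h3 : U0 (-τ) w = U0 (-t) v := by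
          rw [hU0w τ]; congr 2; ring
        rw [h1, h2, h3]
      have hdiff : f v t - f v t' = -((1/2 : ℂ) • U t' I) := by
        have := congrArg (fun x => U t' x) hd
        simp only [map_sub, _root_.map_smul] at this
        rw [hLHS] at this
        rw [this]
        simp [hf, hw]
      rw [hdiff]
      have hnorm1 : ‖-((1/2 : ℂ) • U t' I)‖ = (1/2) * ‖U t' I‖ := by
        rw [norm_neg, norm_smul]
        norm_num
      rw [hnorm1]
      have hUI : ‖U t' I‖ ≤ ‖I‖ := hcontr t' ht' I
      -- bound ‖I‖ by the integral of norms, then by the integral of `g (· + t')`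
      have hgsh : Integrable (fun s : ℝ => g (s + t')) := hgint.comp_add_right t'
      have hstep : ‖I‖ ≤ ∫ s in (0:ℝ)..τ, g (s + t') := by
        have h1 : ‖I‖ ≤ ∫ s in (0:ℝ)..τ, ‖U s ((adjoint C) (C (U0 (-s) w)))‖ :=
          intervalIntegral.norm_integral_le_integral_norm hτ
        have hptwise : ∀ s ∈ Set.Icc (0:ℝ) τ,
            ‖U s ((adjoint C) (C (U0 (-s) w)))‖ ≤ g (s + t') := by
          intro s hs
          have h2 := hcontr s hs.1 ((adjoint C) (C (U0 (-s) w)))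
          have h3 : g (s + t') = ‖(adjoint C) (C (U0 (-s) w))‖ := by
            rw [hg]; rw [hU0w s]
          rw [h3]; exact h2
        by_cases hmeas : IntervalIntegrable
            (fun s => ‖U s ((adjoint C) (C (U0 (-s) w)))‖) volume 0 τ
        · refine h1.trans ?_
          exact intervalIntegral.integral_mono_on hτ hmeas
            (hgsh.intervalIntegrable) hptwise
        · have hI0 : I = 0 := by
            rw [hI]
            apply intervalIntegral.integral_undef
            intro hcon
            exact hmeas hcon.norm
          rw [hI0, norm_zero]
          apply intervalIntegral.integral_nonneg hτ
          intro s _; exact hgnn _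
      have hshift : (∫ s in (0:ℝ)..τ, g (s + t')) = G t - G t' := by
        rw [intervalIntegral.integral_comp_add_right g t']
        have h4 : (0:ℝ) + t' = t' := by ring
        have h5 : τ + t' = t := by ring
        rw [h4, h5]
        rw [← intervalIntegral.integral_Iic_sub_Iic hgint.integrableOn hgint.integrableOn]
      calc (1/2) * ‖U t' I‖ ≤ (1/2) * ‖I‖ := by linarith
        _ ≤ (1/2) * (G t - G t') := by
            rw [← hshift]; linarith [hstep]
    -- conclude Cauchy from the estimate and the Cauchyness of `G`
    rw [Metric.cauchySeq_iff]
    intro ε hε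
    rw [Metric.cauchySeq_iff] at hGcauchy
    obtain ⟨N, hN⟩ := hGcauchy ε hε
    refine ⟨max N 0, fun m hm n hn => ?_⟩
    have hm0 : 0 ≤ m := le_trans (le_max_right N 0) hm
    have hn0 : 0 ≤ n := le_trans (le_max_right N 0) hn
    have hmN : N ≤ m := le_trans (le_max_left N 0) hm
    have hnN : N ≤ n := le_trans (le_max_left N 0) hn
    have hGd := hN m hmN n hnN
    rw [Real.dist_eq] at hGd
    have he : |G n - G m| = |G m - G n| := abs_sub_comm _ _
    rcases le_total n m with h | h
    · have hk := key n m hn0 h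
      rw [dist_eq_norm]
      have habs : G m - G n ≤ |G m - G n| := le_abs_self _
      calc ‖f v m - f v n‖ ≤ (1/2) * (G m - G n) := hk
        _ < ε := by linarith
    · have hk := key m n hm0 h
      rw [dist_eq_norm, ← norm_neg, neg_sub]
      have habs : G n - G m ≤ |G n - G m| := le_abs_self _
      calc ‖f v n - f v m‖ ≤ (1/2) * (G n - G m) := hk
        _ < ε := by linarith
  -- extend to all of ℋ by density and uniform contraction bounds
  intro u
  apply cauchySeq_tendsto_of_complete
  rw [Metric.cauchySeq_iff]
  intro ε hε
  obtain ⟨v, hvE, hv⟩ := hE.exists_dist_lt u (show (0:ℝ) < ε/4 by linarith)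
  have hvc := hcau v hvE
  rw [Metric.cauchySeq_iff] at hvc
  obtain ⟨N, hN⟩ := hvc (ε/4) (by linarith)
  refine ⟨max N 0, fun m hm n hn => ?_⟩
  have hm0 : 0 ≤ m := le_trans (le_max_right N 0) hm
  have hn0 : 0 ≤ n := le_trans (le_max_right N 0) hn
  have hclose : ∀ t : ℝ, 0 ≤ t → dist (f u t) (f v t) < ε/4 := by
    intro t ht
    rw [dist_eq_norm]
    have h1 : f u t - f v t = U t (U0 (-t) (u - v)) := by
      simp [hf, map_sub]
    rw [h1]
    calc ‖U t (U0 (-t) (u - v))‖ ≤ ‖U0 (-t) (u - v)‖ := hcontr t ht _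
      _ = ‖u - v‖ := hunitary _ _
      _ < ε/4 := by rw [← dist_eq_norm]; exact hv
  have h2 := hN m (le_trans (le_max_left N 0) hm) n (le_trans (le_max_left N 0) hn)
  calc dist (f u m) (f u n)
      ≤ dist (f u m) (f v m) + dist (f v m) (f v n) + dist (f v n) (f u n) :=
        dist_triangle4 _ _ _ _
    _ < ε/4 + ε/4 + ε/4 := by
        have := hclose m hm0
        have h3 := hclose n hn0
        rw [dist_comm (f v n)]
        linarith
    _ < ε := by linarith
end

section
/- Suppose W₊(H,H₀) exists on ℋ, is injective, satisfies the intertwining relation e^{-itH}W₊(H,H₀) = W₊(H,H₀)e^{-itH₀} for t ∈ ℝ, is a contraction, and satisfies lim_{t→∞}‖W₊(H,H₀)e^{itH₀}u‖ = ‖u‖ for all u. Then Ran(W₊(H,H₀)) is closed if and only if the restriction of {e^{-itH}}_{t∈ℝ} to Ran(W₊(H,H₀)) is uniformly bounded in t ∈ ℝ. -/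
open MeasureTheory Filter Topology ContinuousLinearMap

/-!
An injective operator between Banach spaces has closed range iff it is bounded below
(open mapping theorem). If `W` is bounded below, intertwining transports the isometries
`e^{-itH₀}` to `e^{-itH}` on `Ran W` with a uniform bound. Conversely, a uniform bound `M`
gives `‖W e^{itH₀} u‖ = ‖e^{itH} W u‖ ≤ M ‖W u‖`, and letting `t → ∞` yields
`‖u‖ ≤ M ‖W u‖`.
-/

section Intertwining

variable {𝕜 E F : Type*} [NontriviallyNormedField 𝕜]
  [NormedAddCommGroup E] [NormedSpace 𝕜 E] [NormedAddCommGroup F] [NormedSpace 𝕜 F]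
  {U0 : ℝ → E →L[𝕜] E} {U : ℝ → F →L[𝕜] F} {W : E →L[𝕜] F}

theorem norm_apply_le_on_range_of_antilipschitz_of_intertwines {K : NNReal}
    (hW : AntilipschitzWith K W) (hU0 : ∀ t u, ‖U0 t u‖ = ‖u‖)
    (hint : ∀ t u, U t (W u) = W (U0 t u)) :
    ∀ t, ∀ v ∈ Set.range W, ‖U t v‖ ≤ ‖W‖ * K * ‖v‖ := by
  rintro t _ ⟨u, rfl⟩
  calc ‖U t (W u)‖ = ‖W (U0 t u)‖ := by rw [hint]
    _ ≤ ‖W‖ * ‖u‖ := by simpa only [hU0] using W.le_opNorm (U0 t u)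
    _ ≤ ‖W‖ * (K * ‖W u‖) := by gcongr; exact W.bound_of_antilipschitz hW u
    _ = ‖W‖ * K * ‖W u‖ := (mul_assoc _ _ _).symm

theorem exists_antilipschitzWith_of_norm_apply_le_on_range {M : ℝ}
    (hM : ∀ t, ∀ v ∈ Set.range W, ‖U t v‖ ≤ M * ‖v‖)
    (hint : ∀ t u, U t (W u) = W (U0 t u))
    (hlim : ∀ u, Tendsto (fun t => ‖W (U0 (-t) u)‖) atTop (𝓝 ‖u‖)) :
    ∃ K, AntilipschitzWith K W := by
  refine ⟨M.toNNReal, W.antilipschitz_of_bound fun u => le_of_tendsto' (hlim u) fun t => ?_⟩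
  calc ‖W (U0 (-t) u)‖ = ‖U (-t) (W u)‖ := by rw [hint]
    _ ≤ M * ‖W u‖ := hM (-t) (W u) ⟨u, rfl⟩
    _ ≤ M.toNNReal * ‖W u‖ := by gcongr; exact Real.le_coe_toNNReal M

end Intertwining

theorem stmt11_general
    {ℋ : Type*} [NormedAddCommGroup ℋ] [InnerProductSpace ℂ ℋ] [CompleteSpace ℋ]
    (U0 U : ℝ → ℋ →L[ℂ] ℋ)
    (hunitary : ∀ t : ℝ, ∀ u : ℋ, ‖U0 t u‖ = ‖u‖)
    (W : ℋ →L[ℂ] ℋ)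
    (hinj : Function.Injective W)
    (hint : ∀ t : ℝ, ∀ u : ℋ, U t (W u) = W (U0 t u))
    (hlim : ∀ u : ℋ, Tendsto (fun t => ‖W (U0 (-t) u)‖) atTop (𝓝 ‖u‖)) :
    IsClosed (Set.range W) ↔
      ∃ M : ℝ, ∀ t : ℝ, ∀ v ∈ Set.range W, ‖U t v‖ ≤ M * ‖v‖ := by
  rw [W.isClosed_range_iff_antilipschitz_of_injective hinj]
  exact ⟨fun ⟨_, hK⟩ =>
      ⟨_, norm_apply_le_on_range_of_antilipschitz_of_intertwines hK hunitary hint⟩,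
    fun ⟨_, hM⟩ => exists_antilipschitzWith_of_norm_apply_le_on_range hM hint hlim⟩

/-- suppose `W = W₊(H,H₀)` exists on ℋ, is injective, intertwines
(`e^{-itH}W = W e^{-itH₀}` for all `t ∈ ℝ`), is a contraction, and satisfies
`lim_{t→∞} ‖W e^{itH₀}u‖ = ‖u‖` for all `u`.  Then `Ran W` is closed iff the
restriction of `{e^{-itH}}_{t∈ℝ}` to `Ran W` is uniformly bounded.
Here `U0 t = e^{-itH₀}` is a unitary group and `U t = e^{-itH}` a group. -/
theorem stmt11
    {ℋ : Type*} [NormedAddCommGroup ℋ] [InnerProductSpace ℂ ℋ] [CompleteSpace ℋ]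
    [TopologicalSpace.SeparableSpace ℋ]
    (U0 U : ℝ → ℋ →L[ℂ] ℋ)
    (hU00 : U0 0 = 1) (hgroup0 : ∀ s t : ℝ, U0 (s + t) = (U0 s).comp (U0 t))
    (hunitary : ∀ t : ℝ, ∀ u : ℋ, ‖U0 t u‖ = ‖u‖)
    (hU0' : U 0 = 1) (hgroup : ∀ s t : ℝ, U (s + t) = (U s).comp (U t))
    (W : ℋ →L[ℂ] ℋ)
    (hW : ∀ u : ℋ, Tendsto (fun t => U t (U0 (-t) u)) atTop (𝓝 (W u)))
    (hinj : Function.Injective W)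
    (hint : ∀ t : ℝ, ∀ u : ℋ, U t (W u) = W (U0 t u))
    (hWcontr : ∀ u : ℋ, ‖W u‖ ≤ ‖u‖)
    (hlim : ∀ u : ℋ, Tendsto (fun t => ‖W (U0 (-t) u)‖) atTop (𝓝 ‖u‖)) :
    IsClosed (Set.range W) ↔
      ∃ M : ℝ, ∀ t : ℝ, ∀ v ∈ Set.range W, ‖U t v‖ ≤ M * ‖v‖ :=
  stmt11_general U0 U hunitary W hinj hint hlim
end

section
/- Let M(H) := { u ∈ ℋ : ∃ c_u > 0, ∀ v ∈ ℋ, ∫₀^∞ |⟨e^{-itH}u, v⟩|² dt ≤ c_u ‖v‖² } and ℋ_ac(H) its closure. If W₊(H,H₀) ∈ B(ℋ) exists with intertwining relation e^{-itH}W₊(H,H₀) = W₊(H,H₀)e^{-itH₀}, and H₀ is self-adjoint with purely absolutely continuous spectrum (so that ∫₀^∞ |⟨e^{-itH₀}w, x⟩|² dt ≤ const·‖w‖²‖x‖² for all w, x ∈ ℋ), then Ran(W₊(H,H₀)) ⊂ ℋ_ac(H). -/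
open MeasureTheory Filter Topology ContinuousLinearMap

/-- let `M(H) = {u | ∃ c_u > 0, ∀ v, ∫₀^∞ |⟨e^{-itH}u,v⟩|² dt ≤ c_u ‖v‖²}`
and `ℋ_ac(H)` its closure.  If `W = W₊(H,H₀)` exists with the intertwining relation
`e^{-itH}W = W e^{-itH₀}`, and `H₀` has purely absolutely continuous spectrum
(so `∫₀^∞ |⟨e^{-itH₀}w,x⟩|² dt ≤ K‖w‖²‖x‖²`), then `Ran W ⊆ ℋ_ac(H)`.
Here `U0 t = e^{-itH₀}` is a unitary group and `U t = e^{-itH}` a contraction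
semigroup. -/
theorem stmt12
    {ℋ : Type*} [NormedAddCommGroup ℋ] [InnerProductSpace ℂ ℋ] [CompleteSpace ℋ]
    [TopologicalSpace.SeparableSpace ℋ]
    (U0 U : ℝ → ℋ →L[ℂ] ℋ)
    (hU00 : U0 0 = 1) (hgroup0 : ∀ s t : ℝ, U0 (s + t) = (U0 s).comp (U0 t))
    (hunitary : ∀ t : ℝ, ∀ u : ℋ, ‖U0 t u‖ = ‖u‖)
    (hU0' : U 0 = 1)
    (hsemi : ∀ s t : ℝ, 0 ≤ s → 0 ≤ t → U (s + t) = (U s).comp (U t))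
    (hcontr : ∀ t : ℝ, 0 ≤ t → ∀ u : ℋ, ‖U t u‖ ≤ ‖u‖)
    (W : ℋ →L[ℂ] ℋ)
    (hW : ∀ u : ℋ, Tendsto (fun t => U t (U0 (-t) u)) atTop (𝓝 (W u)))
    (hint : ∀ t : ℝ, 0 ≤ t → ∀ u : ℋ, U t (W u) = W (U0 t u))
    (K : ℝ)
    (hac0 : ∀ w x : ℋ,
      IntegrableOn (fun t : ℝ => ‖(@inner ℂ ℋ _ (U0 t w) x)‖ ^ 2) (Set.Ioi (0:ℝ)) ∧
      ∫ t in Set.Ioi (0:ℝ), ‖(@inner ℂ ℋ _ (U0 t w) x)‖ ^ 2 ≤ K * ‖w‖ ^ 2 * ‖x‖ ^ 2) :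
    Set.range W ⊆
      closure {u : ℋ | ∃ c : ℝ, 0 < c ∧ ∀ v : ℋ,
        ∫ t in Set.Ioi (0:ℝ), ‖(@inner ℂ ℋ _ (U t u) v)‖ ^ 2 ≤ c * ‖v‖ ^ 2} := by
  rintro u ⟨w, rfl⟩
  apply subset_closure
  refine ⟨|K| * ‖w‖ ^ 2 * ‖W‖ ^ 2 + 1, by positivity, fun v => ?_⟩
  set x := (ContinuousLinearMap.adjoint W) v with hx
  have hcong : ∫ t in Set.Ioi (0:ℝ), ‖(@inner ℂ ℋ _ (U t (W w)) v)‖ ^ 2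
      = ∫ t in Set.Ioi (0:ℝ), ‖(@inner ℂ ℋ _ (U0 t w) x)‖ ^ 2 := by
    apply setIntegral_congr_fun measurableSet_Ioi
    intro t ht
    simp only [hint t (le_of_lt ht), hx]
    rw [ContinuousLinearMap.adjoint_inner_right]
  rw [hcong]
  have h1 := (hac0 w x).2
  have h2 : ‖x‖ ≤ ‖W‖ * ‖v‖ := by
    calc ‖x‖ ≤ ‖ContinuousLinearMap.adjoint W‖ * ‖v‖ := (ContinuousLinearMap.adjoint W).le_opNorm v
    _ = ‖W‖ * ‖v‖ := by rw [LinearIsometryEquiv.norm_map]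
  have h4 : ‖x‖ ^ 2 ≤ (‖W‖ * ‖v‖) ^ 2 := pow_le_pow_left₀ (norm_nonneg x) h2 2
  have h3 : K * ‖w‖ ^ 2 * ‖x‖ ^ 2 ≤ |K| * ‖w‖ ^ 2 * ‖x‖ ^ 2 := by
    nlinarith [le_abs_self K, mul_nonneg (sq_nonneg ‖w‖) (sq_nonneg ‖x‖)]
  have h5 : |K| * ‖w‖ ^ 2 * ‖x‖ ^ 2 ≤ |K| * ‖w‖ ^ 2 * (‖W‖ * ‖v‖) ^ 2 := by
    have : (0:ℝ) ≤ |K| * ‖w‖ ^ 2 := by positivity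
    nlinarith
  nlinarith [sq_nonneg ‖v‖, mul_pow ‖W‖ ‖v‖ 2]
end
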